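/- If m ≥ 1, (D, ξ) ∈ NestPer(m), D_0 ⊆ D satisfies D = Spread(D_0, ξ) ∩ Close(D) and diam(D_0) ≤ ξ (i.e., D_0 is a bottom of (D, ξ)), ω(m−1, D_0) ≤ α for a positive integer α, and D̄ is a ξ-cut of D, then ω(m−1, D̄) ≤ 2α. -/
import Mathlib


namespace PalLen

variable {α : Type*}

/-- `u` is a palindrome (the empty word counts; "nonempty palindrome" adds `u ≠ []`). -/
def IsPal (u : List α) : Prop := u.reverse = u

/-- `ξ` is a period of the word `t` (0-indexed: `t[i] = t[i+ξ]` whenever both indices are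
valid); in particular every `ξ ≥ |t|` is a period. -/
def IsPeriod (t : List α) (ξ : ℕ) : Prop :=
  1 ≤ ξ ∧ ∀ i : ℕ, i + ξ < t.length → t[i]? = t[i + ξ]?

/-- the minimal period of `t` -/
noncomputable def mper (t : List α) : ℕ := sInf {ξ | IsPeriod t ξ}

/-- `order(t) = |t| / mper(t) ∈ ℚ` -/
noncomputable def wOrder (t : List α) : ℚ := (t.length : ℚ) / (mper t : ℚ)

/-- a non-periodic palindromic couple -/
def PalCouple (p₁ p₂ : List α) : Prop :=
  IsPal p₁ ∧ IsPal p₂ ∧ p₂ ≠ [] ∧ wOrder (p₁ ++ p₂ ++ p₁) < 2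

/-- `wpow w n = w^n` -/
def wpow (w : List α) : ℕ → List α
  | 0 => []
  | n + 1 => w ++ wpow w n

/-- `u` is a factor of the infinite word `w^∞` -/
def FactorOfPow (u w : List α) : Prop := ∃ n : ℕ, u <:+: wpow w n

/-- `u` is a prefix of the infinite word `w^∞` -/
def PrefixOfPow (u w : List α) : Prop := ∃ n : ℕ, u <+: wpow w n

/-- the palindromic length of a word -/
noncomputable def PL (u : List α) : ℕ :=
  sInf {k | ∃ ps : List (List α), ps.length = k ∧ (∀ p ∈ ps, p ≠ [] ∧ IsPal p) ∧
    ps.flatten = u}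

/-- `u` is a (finite) factor of the infinite word `x` -/
def FactorOfInf (u : List α) (x : ℕ → α) : Prop :=
  ∃ i : ℕ, u = (List.range u.length).map fun j => x (i + j)

/-- `u` is a prefix of the infinite word `x` -/
def PrefixOfInf (u : List α) (x : ℕ → α) : Prop :=
  u = (List.range u.length).map fun j => x j

/-- `x = u v v v ⋯` for some finite words `u, v` with `v` nonempty -/
def UltimatelyPeriodic (x : ℕ → α) : Prop :=
  ∃ u v : List α, v ≠ [] ∧ (∀ i : ℕ, i < u.length → u[i]? = some (x i)) ∧
    ∀ i : ℕ, v[i % v.length]? = some (x (u.length + i))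

/-- padding of an infinite word over `Σ₀ = α`; the padding letter `b` is `none`,
the letters of `Σ₀` are embedded via `some`.  (0-indexed: even positions carry `b`.) -/
def padInf (x : ℕ → α) : ℕ → Option α :=
  fun i => if i % 2 = 0 then none else some (x (i / 2))

/-- padding of a finite word: `pad(u₁u₂⋯uₙ) = u₁ b u₂ b ⋯ b uₙ` -/
def padF (u : List α) : List (Option α) := List.intersperse none (u.map some)

/-- the padded palindromic length: minimal `k` with `w = p₁ b p₂ b ⋯ b p_k`,
each `pᵢ` a nonempty palindrome -/
noncomputable def PPL (w : List (Option α)) : ℕ :=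
  sInf {k | ∃ ps : List (List (Option α)), ps.length = k ∧
    (∀ p ∈ ps, p ≠ [] ∧ IsPal p) ∧ (List.intersperse [none] ps).flatten = w}

/-- the set of nonempty non-periodic palindromic prefixes of `t` -/
def NPP (t : List α) : Set (List α) :=
  {p | p ≠ [] ∧ p <+: t ∧ IsPal p ∧ wOrder p < 2}

/-- the set of nonempty non-periodic palindromic prefixes of an infinite word -/
def NPPInf (x : ℕ → α) : Set (List α) :=
  {p | p ≠ [] ∧ PrefixOfInf p x ∧ IsPal p ∧ wOrder p < 2}

/-- a word is ordinary if no factor has more nonempty non-periodic palindromic prefixes -/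
def Ordinary (t : List α) : Prop := ∀ u : List α, u <:+: t → (NPP u).ncard ≤ (NPP t).ncard

/-- `seg z i j = z[i,j]` (1-indexed, inclusive) -/
def seg (z : List α) (i j : ℕ) : List α := (z.drop (i - 1)).take (j - i + 1)

/-- `Spread(D, ξ)` restricted to ℕ -/
def Spread (D : Set ℕ) (ξ : ℕ) : Set ℕ :=
  {n | ∃ i ∈ D, ∃ a : ℤ, (n : ℤ) = (i : ℤ) + a * (ξ : ℤ)}

/-- `Close(D) = [min D, max D]` for nonempty `D`, `∅` otherwise -/
def Close (D : Set ℕ) : Set ℕ := {n | D.Nonempty ∧ sInf D ≤ n ∧ n ≤ sSup D}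

open Classical in
/-- the diameter of a set -/
noncomputable def diam (D : Set ℕ) : ℕ :=
  if D.Nonempty then sSup D - sInf D + 1 else 0

/-- `D'` is a ξ-cut of `D` -/
def IsCut (D : Set ℕ) (ξ : ℕ) (D' : Set ℕ) : Prop :=
  D' ⊆ D ∧ (D' = ∅ ∨ diam D' ≤ ξ)

variable (z : List α)

/-- `h = |NPP(z)|` -/
noncomputable def hNPP : ℕ := (NPP z).ncard

/-- `θ(m) = (100h)^m` -/
noncomputable def theta (m : ℕ) : ℕ := (100 * hNPP z) ^ m

/-- the ambient set `W` of candidate nested periodic structures -/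
def NPSW : Set (Set ℕ × ℕ) :=
  {Dξ | Dξ.1.Nonempty ∧ Dξ.1 ⊆ Set.Icc 1 z.length ∧
    Dξ.1 = Spread Dξ.1 Dξ.2 ∩ Close Dξ.1 ∧
    IsPeriod (seg z (sInf Dξ.1) (sSup Dξ.1)) Dξ.2}

/-- nested periodic structures of degree `m` -/
def NestPer : ℕ → Set (Set ℕ × ℕ)
  | 0 => {Dξ ∈ NPSW z | Dξ.1.ncard = 1}
  | m + 1 => {Dξ ∈ NPSW z | ∀ D' : Set ℕ, IsCut Dξ.1 Dξ.2 D' →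
      ∃ M : Set (Set ℕ × ℕ), M ⊆ NestPer m ∧ M.Finite ∧ M.ncard ≤ theta z (m + 1) ∧
        D' ⊆ (⋃ C ∈ M, C.1) ∧ (⋃ C ∈ M, C.1) ⊆ Close D'}

/-- `ω(m, D)`: the minimal cardinality of an NPS cover of `D` of degree `m` -/
noncomputable def omegaMin (m : ℕ) (D : Set ℕ) : ℕ :=
  sInf {k | ∃ M : Set (Set ℕ × ℕ), M ⊆ NestPer z m ∧ M.Finite ∧ M.ncard = k ∧
    D ⊆ (⋃ C ∈ M, C.1) ∧ (⋃ C ∈ M, C.1) ⊆ Close D}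

/-- `FirmPalPrefix(n)` -/
def FirmPalPrefix (n : ℕ) : Set (List α) :=
  {p₀ ∈ NPP (z.drop (n - 1)) | ∀ p₁ p₂ : List α, PalCouple p₁ p₂ → p₁ ++ p₂ ++ p₁ = p₀ →
    ¬ (wpow (p₁ ++ p₂) 2 ++ p₁ <+: z.drop (n - 1))}

/-- `Γ(n)` -/
def Gamma (n : ℕ) : Set (List α × List α) :=
  {pq | PalCouple pq.1 pq.2 ∧ pq.1 ++ pq.2 ++ pq.1 <+: z.drop (n - 1) ∧
    (pq.1 ++ pq.2 ++ pq.1 ∈ FirmPalPrefix z n → pq.1 = [])}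

/-- palindromic extension tuples `(n, p₁, p₂, α)` of the position `n` -/
def PalExt (n : ℕ) : Set (ℕ × List α × List α × ℕ) :=
  {T | T.1 = n ∧ PalCouple T.2.1 T.2.2.1 ∧ 1 ≤ T.2.2.2 ∧
    ((wpow (T.2.1 ++ T.2.2.1) T.2.2.2 ++ T.2.1 <+: z.drop (n - 1) ∧
        T.2.1 ++ T.2.2.1 ++ T.2.1 ∉ FirmPalPrefix z n) ∨
      (T.2.1 = [] ∧ T.2.2.2 = 1 ∧ T.2.2.1 ∈ FirmPalPrefix z n))}

/-- palindromic extension tuples of a set of positions -/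
def PalExtSet (D : Set ℕ) : Set (ℕ × List α × List α × ℕ) := ⋃ n ∈ D, PalExt z n

/-- `σ(n, p₁, p₂, α) = n − 1 + |(p₁p₂)^α p₁|` -/
def sigmaPE (T : ℕ × List α × List α × ℕ) : ℕ :=
  T.1 - 1 + (wpow (T.2.1 ++ T.2.2.1) T.2.2.2 ++ T.2.1).length

/-- covering palindromes of the position `n` -/
def CovPalAll (n : ℕ) : Set (ℕ × ℕ) :=
  {q | 1 ≤ q.1 ∧ q.1 ≤ n ∧ n ≤ q.2 ∧ q.2 ≤ z.length ∧ IsPal (seg z q.1 q.2)}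

def CovPalAllLeft (n : ℕ) : Set (ℕ × ℕ) :=
  {q ∈ CovPalAll z n | 2 * n ≤ q.1 + q.2}

/-- edge covering palindromes of the position `n` -/
def CovPalEdge (n : ℕ) : Set (ℕ × ℕ) :=
  {q ∈ CovPalAll z n | 1 < q.1 → q.2 < z.length → ¬ IsPal (seg z (q.1 - 1) (q.2 + 1))}

def CovPalEdgeLeft (n : ℕ) : Set (ℕ × ℕ) := CovPalAllLeft z n ∩ CovPalEdge z n

/-- `Mirror(n₁, n₂, j) = n₁ + n₂ − j` -/
def Mirror (n₁ n₂ j : ℕ) : ℕ := n₁ + n₂ - j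

/-- the characterization of `toPalCouple(n₁, n₂) = (p₁, p₂)` -/
def IsToPalCouple (n₁ n₂ : ℕ) (p₁ p₂ : List α) : Prop :=
  PalCouple p₁ p₂ ∧
  ((seg z n₁ n₂ ∈ FirmPalPrefix z n₁ ∧ p₁ = [] ∧ p₂ = seg z n₁ n₂) ∨
    (seg z n₁ n₂ ∉ FirmPalPrefix z n₁ ∧ wpow (p₁ ++ p₂) 2 ++ p₁ <+: z.drop (n₁ - 1) ∧
      ∃ a : ℕ, 1 ≤ a ∧ seg z n₁ n₂ = wpow (p₁ ++ p₂) a ++ p₁))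

/-- compound covering palindromes of `n` -/
def CovPalCmd (n : ℕ) : Set (ℕ × ℕ) :=
  {q ∈ CovPalEdgeLeft z n | ∀ p₁ p₂ : List α, IsToPalCouple z n (Mirror q.1 q.2 n) p₁ p₂ →
    ¬ FactorOfPow (seg z q.1 q.2) (p₁ ++ p₂)}

/-- `(ν₁, ν₂, ξ)` is a run of `z` -/
def IsRun (ν₁ ν₂ ξ : ℕ) : Prop :=
  1 ≤ ν₁ ∧ ν₁ ≤ ν₂ ∧ ν₂ ≤ z.length ∧ IsPeriod (seg z ν₁ ν₂) ξ ∧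
  ξ ≤ ν₂ - ν₁ + 1 ∧
  (ν₂ < z.length → ¬ IsPeriod (seg z ν₁ (ν₂ + 1)) ξ) ∧
  (1 < ν₁ → ¬ IsPeriod (seg z (ν₁ - 1) ν₂) ξ) ∧
  ∃ p₁ p₂ : List α, PalCouple p₁ p₂ ∧ (p₁ ++ p₂).length = ξ ∧ p₁ ++ p₂ <+: seg z ν₁ ν₂

/-- the characterization of `pToRun(n₁, n₂) = r` -/
def IsPToRun (n₁ n₂ : ℕ) (r : ℕ × ℕ × ℕ) : Prop :=
  IsRun z r.1 r.2.1 r.2.2 ∧ r.1 ≤ n₁ ∧ n₂ ≤ r.2.1 ∧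
  ∃ p₁ p₂ : List α, IsToPalCouple z n₁ n₂ p₁ p₂ ∧ r.2.2 = (p₁ ++ p₂).length

/-- `pToRun(X)` as a set of runs -/
def pToRunImage (X : Set (ℕ × ℕ)) : Set (ℕ × ℕ × ℕ) :=
  {r | ∃ q ∈ X, IsPToRun z q.1 q.2 r}

/-- the collection `UC` -/
def UC : Set (Set ℕ) :=
  {S | S ⊆ Set.Icc 1 z.length ∧ ∀ μ₁ μ₂ ξ : ℕ, 1 ≤ μ₁ → μ₁ ≤ μ₂ → μ₂ ≤ z.length →
    IsPeriod (seg z μ₁ μ₂) ξ →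
    ∃ E : Set ℕ, E ⊆ Set.Icc μ₁ μ₂ ∧ E.Finite ∧ E.ncard ≤ 8 ∧
      S ∩ (⋃ δ ∈ E, Set.Icc δ (δ + ξ - 1)) = S ∩ Set.Icc μ₁ μ₂}

end PalLen

namespace PalLen

variable {α : Type*}

/-- the sets `B_j` of base positions, built from the chain `zs 1, …, zs h` of
non-periodic palindromic prefixes and the middle palindromes `zh i` -/
def BaseB (zs zh : ℕ → List α) : ℕ → Set (ℕ × ℕ)
  | 0 => ∅
  | 1 => {(1, 1)}
  | j + 2 => BaseB zs zh (j + 1) ∪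
      ((fun q : ℕ × ℕ => (q.1, q.2 + (zs (j + 1)).length + (zh (j + 1)).length)) ''
        BaseB zs zh (j + 1)) ∪
      {(j + 2, 1)}

end PalLen
namespace PalLen
variable {α : Type*}

theorem seg_get (z : List α) (L R i : ℕ) :
    (seg z L R)[i]? = if i < R - L + 1 then z[L - 1 + i]? else none := by
  rw [seg, List.getElem?_take]
  split <;> simp [List.getElem?_drop]

theorem seg_length (z : List α) (L R : ℕ) :
    (seg z L R).length = min (R - L + 1) (z.length - (L - 1)) := by
  simp [seg]

theorem seg_length' (z : List α) (L R : ℕ) (hL : 1 ≤ L) (hLR : L ≤ R) (hR : R ≤ z.length) :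
    (seg z L R).length = R - L + 1 := by
  rw [seg_length]; omega

/-- pointwise single-step periodicity -/
theorem period_step (z : List α) (L R ξ : ℕ) (hper : IsPeriod (seg z L R) ξ)
    (hL : 1 ≤ L) (hR : R ≤ z.length) (p : ℕ) (hp : L ≤ p + 1) (hpR : p + 1 + ξ ≤ R) :
    z[p]? = z[p + ξ]? := by
  have hLR : L ≤ R := by omega
  have hlen := seg_length' z L R hL hLR hR
  have h := hper.2 (p - (L - 1)) (by omega)
  rw [seg_get, seg_get] at h
  rw [if_pos (by omega), if_pos (by omega)] at h
  have e1 : L - 1 + (p - (L - 1)) = p := by omega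
  have e2 : L - 1 + (p - (L - 1) + ξ) = p + ξ := by omega
  rwa [e1, e2] at h

theorem period_iter (z : List α) (L R ξ : ℕ) (hper : IsPeriod (seg z L R) ξ)
    (hL : 1 ≤ L) (hR : R ≤ z.length) :
    ∀ (β p : ℕ), L ≤ p + 1 → p + β * ξ + 1 ≤ R → z[p]? = z[p + β * ξ]? := by
  intro β
  induction β with
  | zero => simp
  | succ b ih =>
    intro p hp hpR
    have hξ := hper.1
    have h1 : z[p]? = z[p + ξ]? := period_step z L R ξ hper hL hR p hp (by nlinarith)
    have h2 := ih (p + ξ) (by omega) (by nlinarith)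
    rw [h1, h2]; congr 1; ring

/-- letters at positions (0-based) congruent mod ξ within a ξ-periodic segment agree -/
theorem period_congr (z : List α) (L R ξ : ℕ) (hper : IsPeriod (seg z L R) ξ)
    (hL : 1 ≤ L) (hR : R ≤ z.length) (p q : ℕ) (hp : L ≤ p + 1) (hpR : p + 1 ≤ R)
    (hq : L ≤ q + 1) (hqR : q + 1 ≤ R) (hdvd : (ξ : ℤ) ∣ (q : ℤ) - (p : ℤ)) :
    z[p]? = z[q]? := by
  rcases le_total p q with h | h
  · obtain ⟨c, hc⟩ := hdvd
    have hc0 : 0 ≤ c := by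
      have hξ : 0 < (ξ:ℤ) := by exact_mod_cast hper.1
      nlinarith [hc]
    lift c to ℕ using hc0 with β
    have hq'' : (q:ℤ) = (p:ℤ) + (β:ℤ) * (ξ:ℤ) := by linear_combination hc
    have hq' : q = p + β * ξ := by exact_mod_cast hq''
    subst hq'
    exact period_iter z L R ξ hper hL hR β p hp hqR
  · obtain ⟨c, hc⟩ := hdvd
    have hc0 : c ≤ 0 := by
      have hξ : 0 < (ξ:ℤ) := by exact_mod_cast hper.1
      nlinarith [hc]
    obtain ⟨β, hβ⟩ : ∃ β : ℕ, c = -(β:ℤ) := ⟨(-c).toNat, by omega⟩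
    subst hβ
    have hp'' : (p:ℤ) = (q:ℤ) + (β:ℤ) * (ξ:ℤ) := by linear_combination -hc
    have hp' : p = q + β * ξ := by exact_mod_cast hp''
    subst hp'
    exact (period_iter z L R ξ hper hL hR β q hq hpR).symm

/-- transfer of a segment along a multiple of the period -/
theorem seg_shift (z : List α) (L R ξ : ℕ) (hper : IsPeriod (seg z L R) ξ)
    (hL : 1 ≤ L) (hR : R ≤ z.length) (i j i' j' : ℕ) (s : ℤ)
    (hs : (ξ : ℤ) ∣ s) (hij : i ≤ j) (hLi : L ≤ i) (hjR : j ≤ R)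
    (hi' : (i' : ℤ) = (i : ℤ) + s) (hj' : (j' : ℤ) = (j : ℤ) + s)
    (hLi' : L ≤ i') (hjR' : j' ≤ R) :
    seg z i' j' = seg z i j := by
  have hij' : i' ≤ j' := by omega
  have hdiff : j' - i' = j - i := by omega
  apply List.ext_getElem?
  intro n
  rw [seg_get, seg_get, hdiff]
  split
  · rename_i hn
    refine period_congr z L R ξ hper hL hR _ _ (by omega) (by omega) (by omega) (by omega) ?_
    have he : ((i - 1 + n : ℕ) : ℤ) - ((i' - 1 + n : ℕ) : ℤ) = -s := by push_cast; omega
    rw [he]; exact dvd_neg.mpr hs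
  · rfl

theorem isPeriod_seg_congr (z : List α) (L R ξ ξ' : ℕ) (hper : IsPeriod (seg z L R) ξ)
    (hL : 1 ≤ L) (hR : R ≤ z.length) (i j i' j' : ℕ) (s : ℤ)
    (hs : (ξ : ℤ) ∣ s) (hij : i ≤ j) (hLi : L ≤ i) (hjR : j ≤ R)
    (hi' : (i' : ℤ) = (i : ℤ) + s) (hj' : (j' : ℤ) = (j : ℤ) + s)
    (hLi' : L ≤ i') (hjR' : j' ≤ R) (h : IsPeriod (seg z i j) ξ') :
    IsPeriod (seg z i' j') ξ' := by
  rwa [seg_shift z L R ξ hper hL hR i j i' j' s hs hij hLi hjR hi' hj' hLi' hjR']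

/-- a period of a segment is a period of a subsegment -/
theorem isPeriod_seg_mono (z : List α) (L R L' R' ξ : ℕ) (hper : IsPeriod (seg z L R) ξ)
    (hL : 1 ≤ L) (hR : R ≤ z.length) (h1 : L ≤ L') (h2 : L' ≤ R') (h3 : R' ≤ R) :
    IsPeriod (seg z L' R') ξ := by
  refine ⟨hper.1, fun i hi => ?_⟩
  rw [seg_length' z L' R' (by omega) h2 (by omega)] at hi
  rw [seg_get, seg_get, if_pos (by omega), if_pos (by omega)]
  have := period_step z L R ξ hper hL hR (L' - 1 + i) (by omega) (by omega)
  rw [this]; congr 1; omega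

/-! ### set-theoretic lemmas -/

theorem close_mem_iff {S : Set ℕ} (hfin : S.Finite) {n : ℕ} :
    n ∈ Close S ↔ (∃ i ∈ S, i ≤ n) ∧ (∃ j ∈ S, n ≤ j) := by
  constructor
  · rintro ⟨hne, h1, h2⟩
    exact ⟨⟨sInf S, Nat.sInf_mem hne, h1⟩, ⟨sSup S, Nat.sSup_mem hne hfin.bddAbove, h2⟩⟩
  · rintro ⟨⟨i, hi, hin⟩, ⟨j, hj, hnj⟩⟩
    exact ⟨⟨i, hi⟩, le_trans (Nat.sInf_le hi) hin, le_trans hnj (le_csSup hfin.bddAbove hj)⟩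

theorem diam_le_iff {S : Set ℕ} (hfin : S.Finite) (hne : S.Nonempty) {ξ : ℕ} :
    diam S ≤ ξ ↔ ∀ i ∈ S, ∀ j ∈ S, j + 1 ≤ i + ξ := by
  have hmem1 := Nat.sInf_mem hne
  have hmem2 := Nat.sSup_mem hne hfin.bddAbove
  have h12 : sInf S ≤ sSup S := le_csSup hfin.bddAbove hmem1
  rw [diam, if_pos hne]
  constructor
  · intro h i hi j hj
    have h1 : sInf S ≤ i := Nat.sInf_le hi
    have h2 : j ≤ sSup S := le_csSup hfin.bddAbove hj
    omega
  · intro h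
    have := h _ hmem1 _ hmem2
    omega

/-- shift of a set of naturals by an integer -/
def zsh (s : ℤ) (S : Set ℕ) : Set ℕ := {n | ∃ i ∈ S, (n : ℤ) = (i : ℤ) + s}

theorem zsh_eq_image {s : ℤ} {S : Set ℕ} (hpos : ∀ i ∈ S, 0 ≤ (i : ℤ) + s) :
    zsh s S = (fun i : ℕ => ((i : ℤ) + s).toNat) '' S := by
  ext n
  simp only [zsh, Set.mem_image, Set.mem_setOf_eq]
  constructor
  · rintro ⟨i, hi, hn⟩
    exact ⟨i, hi, by omega⟩
  · rintro ⟨i, hi, rfl⟩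
    exact ⟨i, hi, by have := hpos i hi; omega⟩

theorem zsh_ncard {s : ℤ} {S : Set ℕ} (hpos : ∀ i ∈ S, 0 ≤ (i : ℤ) + s) :
    (zsh s S).ncard = S.ncard := by
  rw [zsh_eq_image hpos]
  apply Set.ncard_image_of_injOn
  intro i hi j hj hij
  have := hpos i hi; have := hpos j hj
  simp only at hij
  omega

theorem sInf_zsh {s : ℤ} {S : Set ℕ} (hne : S.Nonempty) (hpos : ∀ i ∈ S, 0 ≤ (i : ℤ) + s) :
    ((sInf (zsh s S) : ℕ) : ℤ) = ((sInf S : ℕ) : ℤ) + s := by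
  have hmem := Nat.sInf_mem hne
  have h0 := hpos _ hmem
  have hmem' : ((((sInf S : ℕ) : ℤ) + s).toNat) ∈ zsh s S := ⟨sInf S, hmem, by omega⟩
  have hle : sInf (zsh s S) ≤ (((sInf S : ℕ) : ℤ) + s).toNat := Nat.sInf_le hmem'
  have hne' : (zsh s S).Nonempty := ⟨_, hmem'⟩
  obtain ⟨i, hi, hieq⟩ := Nat.sInf_mem hne'
  have := Nat.sInf_le hi
  omega

theorem sSup_zsh {s : ℤ} {S : Set ℕ} (hfin : S.Finite) (hne : S.Nonempty)
    (hpos : ∀ i ∈ S, 0 ≤ (i : ℤ) + s) :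
    ((sSup (zsh s S) : ℕ) : ℤ) = ((sSup S : ℕ) : ℤ) + s := by
  have hmem := Nat.sSup_mem hne hfin.bddAbove
  have h0 := hpos _ hmem
  have hmem' : ((((sSup S : ℕ) : ℤ) + s).toNat) ∈ zsh s S := ⟨sSup S, hmem, by omega⟩
  have hbdd : BddAbove (zsh s S) := by
    refine ⟨(((sSup S : ℕ) : ℤ) + s).toNat, ?_⟩
    rintro n ⟨i, hi, hn⟩
    have := le_csSup hfin.bddAbove hi
    omega
  have hle : (((sSup S : ℕ) : ℤ) + s).toNat ≤ sSup (zsh s S) := le_csSup hbdd hmem'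
  have hne' : (zsh s S).Nonempty := ⟨_, hmem'⟩
  obtain ⟨i, hi, hieq⟩ := Nat.sSup_mem hne' hbdd
  have := le_csSup hfin.bddAbove hi
  omega

end PalLen

namespace PalLen
variable {α : Type*}

/-- truncation of a nested periodic structure to a "convex" subset -/
theorem nestPer_trunc (z : List α) :
    ∀ (m : ℕ) (C : Set ℕ) (ξ' : ℕ), (C, ξ') ∈ NestPer z m →
    ∀ (C' : Set ℕ), C' ⊆ C → C'.Nonempty →
    (∀ lo hi n, lo ∈ C' → hi ∈ C' → n ∈ C → lo ≤ n → n ≤ hi → n ∈ C') →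
    (C', ξ') ∈ NestPer z m := by
  intro m C ξ' hC C' hsub hne hbet
  have hW : (C, ξ') ∈ NPSW z := by
    cases m with
    | zero => exact hC.1
    | succ m => exact hC.1
  obtain ⟨hCne', hCicc', hCspread', hCper'⟩ := hW
  have hCne : C.Nonempty := hCne'
  have hCicc : C ⊆ Set.Icc 1 z.length := hCicc'
  have hCspread : C = Spread C ξ' ∩ Close C := hCspread'
  have hCper : IsPeriod (seg z (sInf C) (sSup C)) ξ' := hCper'
  have hfinC : C.Finite := (Set.finite_Icc 1 z.length).subset hCicc
  have hfinC' : C'.Finite := hfinC.subset hsub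
  have hicc' : C' ⊆ Set.Icc 1 z.length := hsub.trans hCicc
  have hW' : (C', ξ') ∈ NPSW z := by
    refine ⟨hne, hicc', ?_, ?_⟩
    · apply Set.Subset.antisymm
      · intro n hn
        exact ⟨⟨n, hn, 0, by push_cast; ring⟩,
          (close_mem_iff hfinC').mpr ⟨⟨n, hn, le_refl n⟩, ⟨n, hn, le_refl n⟩⟩⟩
      · rintro n ⟨⟨i, hi, a, hn⟩, hcl⟩
        obtain ⟨⟨lo, hlo, hlon⟩, ⟨hi', hhi', hnhi⟩⟩ := (close_mem_iff hfinC').mp hcl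
        have hnC : n ∈ C := by
          rw [hCspread]
          exact ⟨⟨i, hsub hi, a, hn⟩,
            (close_mem_iff hfinC).mpr ⟨⟨lo, hsub hlo, hlon⟩, ⟨hi', hsub hhi', hnhi⟩⟩⟩
        exact hbet lo hi' n hlo hhi' hnC hlon hnhi
    · have h1C : 1 ≤ sInf C := (hCicc (Nat.sInf_mem hCne)).1
      have h2C : sSup C ≤ z.length := (hCicc (Nat.sSup_mem hCne hfinC.bddAbove)).2
      have e1 : sInf C ≤ sInf C' := Nat.sInf_le (hsub (Nat.sInf_mem hne))
      have e2 : sInf C' ≤ sSup C' := le_csSup hfinC'.bddAbove (Nat.sInf_mem hne)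
      have e3 : sSup C' ≤ sSup C :=
        le_csSup hfinC.bddAbove (hsub (Nat.sSup_mem hne hfinC'.bddAbove))
      exact isPeriod_seg_mono z (sInf C) (sSup C) (sInf C') (sSup C') ξ' hCper h1C h2C e1 e2 e3
  cases m with
  | zero =>
    obtain ⟨x, hx⟩ := Set.ncard_eq_one.mp hC.2
    subst hx
    have hC'x : C' = {x} := by
      rcases Set.subset_singleton_iff_eq.mp hsub with h | h
      · exact absurd h (by simpa [← Set.nonempty_iff_ne_empty] using hne)
      · exact h
    rw [hC'x]
    exact hC
  | succ m =>
    exact ⟨hW', fun Db hcut => hC.2 Db ⟨hcut.1.trans hsub, hcut.2⟩⟩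

/-- shift of a member of `NPSW` along a multiple of a period -/
theorem npsw_shift (z : List α) (L R ξ : ℕ) (hper : IsPeriod (seg z L R) ξ)
    (hL : 1 ≤ L) (hR : R ≤ z.length) (s : ℤ) (hs : (ξ : ℤ) ∣ s)
    (C : Set ℕ) (ξ' : ℕ) (hW : (C, ξ') ∈ NPSW z)
    (hCLR : C ⊆ Set.Icc L R)
    (hbnd : ∀ i ∈ C, (L : ℤ) ≤ (i : ℤ) + s ∧ (i : ℤ) + s ≤ (R : ℤ)) :
    (zsh s C, ξ') ∈ NPSW z := by
  obtain ⟨hCne', hCicc', hCspread', hCper'⟩ := hW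
  have hCne : C.Nonempty := hCne'
  have hCicc : C ⊆ Set.Icc 1 z.length := hCicc'
  have hCspread : C = Spread C ξ' ∩ Close C := hCspread'
  have hCper : IsPeriod (seg z (sInf C) (sSup C)) ξ' := hCper'
  have hpos : ∀ i ∈ C, 0 ≤ (i : ℤ) + s := fun i hi => by have := (hbnd i hi).1; omega
  have hfinC : C.Finite := (Set.finite_Icc 1 z.length).subset hCicc
  have hsubIcc : zsh s C ⊆ Set.Icc L R := by
    rintro n ⟨i, hi, hn⟩
    have := hbnd i hi
    exact ⟨by omega, by omega⟩
  have hfin' : (zsh s C).Finite := (Set.finite_Icc L R).subset hsubIcc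
  have hne' : (zsh s C).Nonempty := by
    obtain ⟨c, hc⟩ := hCne
    exact ⟨((c : ℤ) + s).toNat, c, hc, by have := hpos c hc; omega⟩
  refine ⟨hne', ?_, ?_, ?_⟩
  · intro n hn
    have := hsubIcc hn
    simp only [Set.mem_Icc] at this ⊢
    omega
  · apply Set.Subset.antisymm
    · intro n hn
      exact ⟨⟨n, hn, 0, by push_cast; ring⟩,
        (close_mem_iff hfin').mpr ⟨⟨n, hn, le_refl n⟩, ⟨n, hn, le_refl n⟩⟩⟩
    · rintro n ⟨⟨i, hi, a, hn⟩, hcl⟩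
      obtain ⟨⟨lo, hlo, hlon⟩, ⟨hi2, hhi2, hnhi⟩⟩ := (close_mem_iff hfin').mp hcl
      obtain ⟨i0, hi0, hi0e⟩ := hi
      obtain ⟨l0, hl0, hl0e⟩ := hlo
      obtain ⟨h0, hh0, hh0e⟩ := hhi2
      have h1l0 : 1 ≤ l0 := (hCicc hl0).1
      have hge : 0 ≤ (n : ℤ) - s := by omega
      have hm0e : ((((n : ℤ) - s).toNat : ℕ) : ℤ) = (n : ℤ) - s := Int.toNat_of_nonneg hge
      have hm0C : ((n : ℤ) - s).toNat ∈ C := by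
        rw [hCspread]
        refine ⟨⟨i0, hi0, a, by linear_combination hm0e + hn + hi0e⟩, ?_⟩
        exact (close_mem_iff hfinC).mpr ⟨⟨l0, hl0, by omega⟩, ⟨h0, hh0, by omega⟩⟩
      exact ⟨((n : ℤ) - s).toNat, hm0C, by omega⟩
  · have h1C : L ≤ sInf C := (hCLR (Nat.sInf_mem hCne)).1
    have h2C : sSup C ≤ R := (hCLR (Nat.sSup_mem hCne hfinC.bddAbove)).2
    have hIJ : sInf C ≤ sSup C := le_csSup hfinC.bddAbove (Nat.sInf_mem hCne)
    have hi' := sInf_zsh hCne hpos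
    have hj' := sSup_zsh hfinC hCne hpos
    have hbInf := hbnd _ (Nat.sInf_mem hCne)
    have hbSup := hbnd _ (Nat.sSup_mem hCne hfinC.bddAbove)
    exact isPeriod_seg_congr z L R ξ ξ' hper hL hR (sInf C) (sSup C)
      (sInf (zsh s C)) (sSup (zsh s C)) s hs hIJ h1C h2C hi' hj'
      (by omega) (by omega) hCper

/-- shift of a nested periodic structure along a multiple of a period -/
theorem nestPer_shift (z : List α) (L R ξ : ℕ) (hper : IsPeriod (seg z L R) ξ)
    (hL : 1 ≤ L) (hR : R ≤ z.length) (s : ℤ) (hs : (ξ : ℤ) ∣ s) :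
    ∀ (m : ℕ) (C : Set ℕ) (ξ' : ℕ), (C, ξ') ∈ NestPer z m →
      C ⊆ Set.Icc L R → (∀ i ∈ C, (L : ℤ) ≤ (i : ℤ) + s ∧ (i : ℤ) + s ≤ (R : ℤ)) →
      (zsh s C, ξ') ∈ NestPer z m := by
  intro m
  induction m with
  | zero =>
    intro C ξ' hC hCLR hbnd
    have hpos : ∀ i ∈ C, 0 ≤ (i : ℤ) + s := fun i hi => by have := (hbnd i hi).1; omega
    exact ⟨npsw_shift z L R ξ hper hL hR s hs C ξ' hC.1 hCLR hbnd,
      by rw [zsh_ncard hpos]; exact hC.2⟩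
  | succ m ih =>
    intro C ξ' hC hCLR hbnd
    obtain ⟨hW, hcuts'⟩ := hC
    have hcuts : ∀ Dc : Set ℕ, IsCut C ξ' Dc →
        ∃ M ⊆ NestPer z m, M.Finite ∧ M.ncard ≤ theta z (m + 1) ∧
          Dc ⊆ ⋃ C ∈ M, C.1 ∧ ⋃ C ∈ M, C.1 ⊆ Close Dc := hcuts'
    have hCne : C.Nonempty := hW.1
    have hfinC : C.Finite := (Set.finite_Icc 1 z.length).subset hW.2.1
    have hsubIcc : zsh s C ⊆ Set.Icc L R := by
      rintro n ⟨i, hi, hn⟩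
      have := hbnd i hi
      exact ⟨by omega, by omega⟩
    refine ⟨npsw_shift z L R ξ hper hL hR s hs C ξ' hW hCLR hbnd, ?_⟩
    intro Db' hcut'
    by_cases hend : Db' = ∅
    · refine ⟨∅, Set.empty_subset _, Set.finite_empty, by simp, by simp [hend], by simp⟩
    · have hneDb' : Db'.Nonempty := Set.nonempty_iff_ne_empty.mpr hend
      have hDbsub : zsh (-s) Db' ⊆ C := by
        rintro n ⟨j, hj, hn⟩
        obtain ⟨i, hiC, hij⟩ := hcut'.1 hj
        have hni : n = i := by omega
        rwa [hni]
      have hback : Db' = zsh s (zsh (-s) Db') := by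
        ext j
        constructor
        · intro hj
          obtain ⟨i, hiC, hij⟩ := hcut'.1 hj
          exact ⟨i, ⟨j, hj, by omega⟩, by omega⟩
        · rintro ⟨i, ⟨j0, hj0, hij0⟩, hji⟩
          have hjj : j = j0 := by omega
          rwa [hjj]
      have hDbne : (zsh (-s) Db').Nonempty := by
        obtain ⟨j, hj⟩ := hneDb'
        obtain ⟨i, hiC, hij⟩ := hcut'.1 hj
        exact ⟨i, j, hj, by omega⟩
      have hfinDb : (zsh (-s) Db').Finite := hfinC.subset hDbsub
      have hfinDb' : Db'.Finite := ((Set.finite_Icc L R).subset hsubIcc).subset hcut'.1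
      have hdiamDb : diam (zsh (-s) Db') ≤ ξ' := by
        rcases hcut'.2 with h | h
        · exact absurd h hend
        · rw [diam_le_iff hfinDb' hneDb'] at h
          rw [diam_le_iff hfinDb hDbne]
          intro i1 hi1 i2 hi2
          have hp1 := hbnd i1 (hDbsub hi1)
          have hp2 := hbnd i2 (hDbsub hi2)
          have hj1 : (((i1 : ℤ) + s).toNat) ∈ Db' := by
            rw [hback]; exact ⟨i1, hi1, by omega⟩
          have hj2 : (((i2 : ℤ) + s).toNat) ∈ Db' := by
            rw [hback]; exact ⟨i2, hi2, by omega⟩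
          have := h _ hj1 _ hj2
          omega
      obtain ⟨M, hMsub, hMfin, hMcard, hMcov, hMclose⟩ :=
        hcuts (zsh (-s) Db') ⟨hDbsub, Or.inr hdiamDb⟩
      have hCloseIcc : ∀ n ∈ Close (zsh (-s) Db'), n ∈ Set.Icc L R := by
        intro n hn
        obtain ⟨⟨lo, hlo, h1⟩, ⟨hi2, hhi2, h2⟩⟩ := (close_mem_iff hfinDb).mp hn
        have e1 := hCLR (hDbsub hlo)
        have e2 := hCLR (hDbsub hhi2)
        simp only [Set.mem_Icc] at e1 e2 ⊢
        omega
      refine ⟨(fun E => (zsh s E.1, E.2)) '' M, ?_, hMfin.image _, ?_, ?_, ?_⟩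
      · rintro _ ⟨E, hE, rfl⟩
        refine ih E.1 E.2 (hMsub hE) ?_ ?_
        · intro i hi
          exact hCloseIcc i (hMclose (Set.mem_biUnion hE hi))
        · intro i hi
          have hiCl := hMclose (Set.mem_biUnion hE hi)
          obtain ⟨⟨lo, hlo, h1⟩, ⟨hi2, hhi2, h2⟩⟩ := (close_mem_iff hfinDb).mp hiCl
          have hb1 := hbnd lo (hDbsub hlo)
          have hb2 := hbnd hi2 (hDbsub hhi2)
          constructor <;> omega
      · exact le_trans (Set.ncard_image_le hMfin) hMcard
      · intro n hn
        rw [hback] at hn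
        obtain ⟨i, hiDb, hni⟩ := hn
        obtain ⟨E, hEM, hiE⟩ := Set.mem_iUnion₂.mp (hMcov hiDb)
        exact Set.mem_biUnion (⟨E, hEM, rfl⟩ : _ ∈ (fun E => (zsh s E.1, E.2)) '' M)
          ⟨i, hiE, hni⟩
      · intro n hn
        obtain ⟨C1, hC1M, hnC⟩ := Set.mem_iUnion₂.mp hn
        obtain ⟨E, hE, rfl⟩ := hC1M
        obtain ⟨i, hiE, hni⟩ := hnC
        have hiCl := hMclose (Set.mem_biUnion hE hiE)
        obtain ⟨⟨lo, hlo, h1⟩, ⟨hi2, hhi2, h2⟩⟩ := (close_mem_iff hfinDb).mp hiCl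
        have hb1 := hbnd lo (hDbsub hlo)
        have hb2 := hbnd hi2 (hDbsub hhi2)
        refine (close_mem_iff hfinDb').mpr
          ⟨⟨((lo : ℤ) + s).toNat, ?_, by omega⟩, ⟨((hi2 : ℤ) + s).toNat, ?_, by omega⟩⟩
        · rw [hback]; exact ⟨lo, hlo, by omega⟩
        · rw [hback]; exact ⟨hi2, hhi2, by omega⟩

theorem hNPP_pos (z : List α) (hz : z ≠ []) : 0 < hNPP z := by
  have hfin : (NPP z).Finite := by
    apply Set.Finite.subset (Set.finite_range (fun n : Fin (z.length + 1) => z.take n))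
    intro p hp
    obtain ⟨hne, hpre, -⟩ := hp
    exact ⟨⟨p.length, by have := hpre.length_le; omega⟩, (List.prefix_iff_eq_take.mp hpre).symm⟩
  rw [hNPP, Set.ncard_pos hfin]
  obtain ⟨c, t, rfl⟩ : ∃ c t, z = c :: t := by
    cases z with
    | nil => exact absurd rfl hz
    | cons c t => exact ⟨c, t, rfl⟩
  refine ⟨[c], by simp, ⟨t, rfl⟩, by simp [IsPal], ?_⟩
  have h1 : IsPeriod [c] 1 := ⟨le_refl 1, by intro i hi; simp at hi⟩
  have hmem : (1 : ℕ) ∈ {ξ | IsPeriod [c] ξ} := h1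
  have hub := Nat.sInf_le hmem
  have hlb : 1 ≤ sInf {ξ | IsPeriod [c] ξ} := (Nat.sInf_mem ⟨1, hmem⟩).1
  have hm : mper [c] = 1 := by rw [mper]; omega
  rw [wOrder, hm]
  norm_num

theorem singleton_nestPer (z : List α) (hz : z ≠ []) (n : ℕ) (h1 : 1 ≤ n) (h2 : n ≤ z.length) :
    ∀ m, (({n} : Set ℕ), (1 : ℕ)) ∈ NestPer z m := by
  have hW : (({n} : Set ℕ), (1 : ℕ)) ∈ NPSW z := by
    refine ⟨⟨n, rfl⟩, by simp only [Set.singleton_subset_iff, Set.mem_Icc]; omega, ?_, ?_⟩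
    · apply Set.Subset.antisymm
      · intro x hx
        simp only [Set.mem_singleton_iff] at hx
        subst hx
        exact ⟨⟨x, rfl, 0, by push_cast; ring⟩,
          ⟨⟨x, rfl⟩, le_of_eq (csInf_singleton x), le_of_eq (csSup_singleton x).symm⟩⟩
      · rintro x ⟨-, ⟨-, hlo, hhi⟩⟩
        rw [csInf_singleton] at hlo
        rw [csSup_singleton] at hhi
        simp only [Set.mem_singleton_iff]
        omega
    · rw [csInf_singleton, csSup_singleton]
      exact ⟨le_refl 1, fun i hi => absurd hi (by rw [seg_length]; omega)⟩
  intro m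
  induction m with
  | zero => exact ⟨hW, Set.ncard_singleton n⟩
  | succ m ih =>
    refine ⟨hW, ?_⟩
    intro Db hcut
    replace hcut : IsCut {n} 1 Db := hcut
    rcases Set.subset_singleton_iff_eq.mp hcut.1 with h | h
    · exact ⟨∅, Set.empty_subset _, Set.finite_empty, by simp, by simp [h], by simp⟩
    · refine ⟨{(({n} : Set ℕ), (1 : ℕ))}, by simp only [Set.singleton_subset_iff]; exact ih,
        Set.finite_singleton _, ?_, ?_, ?_⟩
      · rw [Set.ncard_singleton]
        have hh := hNPP_pos z hz
        simpa [theta] using Nat.one_le_pow (m + 1) (100 * hNPP z) (by omega)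
      · rw [h, Set.biUnion_singleton]
      · rw [h, Set.biUnion_singleton]
        intro x hx
        simp only [Set.mem_singleton_iff] at hx
        subst hx
        exact ⟨⟨x, rfl⟩, le_of_eq (csInf_singleton x), le_of_eq (csSup_singleton x).symm⟩

theorem exists_min_cover (z : List α) (hz : z ≠ []) (m : ℕ) (S : Set ℕ)
    (hS : S ⊆ Set.Icc 1 z.length) :
    ∃ M : Set (Set ℕ × ℕ), M ⊆ NestPer z m ∧ M.Finite ∧ M.ncard = omegaMin z m S ∧
      S ⊆ (⋃ C ∈ M, C.1) ∧ (⋃ C ∈ M, C.1) ⊆ Close S := by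
  have hfinS : S.Finite := (Set.finite_Icc 1 z.length).subset hS
  have hne : {k | ∃ M : Set (Set ℕ × ℕ), M ⊆ NestPer z m ∧ M.Finite ∧ M.ncard = k ∧
      S ⊆ (⋃ C ∈ M, C.1) ∧ (⋃ C ∈ M, C.1) ⊆ Close S}.Nonempty := by
    refine ⟨_, (fun n => (({n} : Set ℕ), (1 : ℕ))) '' S, ?_, hfinS.image _, rfl, ?_, ?_⟩
    · rintro _ ⟨n, hn, rfl⟩
      exact singleton_nestPer z hz n (hS hn).1 (hS hn).2 m
    · intro x hx
      exact Set.mem_biUnion ⟨x, hx, rfl⟩ rfl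
    · intro x hx
      obtain ⟨C1, hC1, hxC⟩ := Set.mem_iUnion₂.mp hx
      obtain ⟨n, hn, rfl⟩ := hC1
      simp only [Set.mem_singleton_iff] at hxC
      subst hxC
      exact (close_mem_iff hfinS).mpr ⟨⟨x, hn, le_refl x⟩, ⟨x, hn, le_refl x⟩⟩
  exact Nat.sInf_mem hne

theorem omegaMin_le_ncard (z : List α) (m : ℕ) (S : Set ℕ) (M : Set (Set ℕ × ℕ))
    (h1 : M ⊆ NestPer z m) (h2 : M.Finite) (h3 : S ⊆ (⋃ C ∈ M, C.1))
    (h4 : (⋃ C ∈ M, C.1) ⊆ Close S) : omegaMin z m S ≤ M.ncard :=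
  Nat.sInf_le ⟨M, h1, h2, rfl, h3, h4⟩

end PalLen

namespace PalLen

/-- truncation window used in the proof of Statement 13 -/
def truncSh (t T : ℕ) (σ : ℤ) (E0 : Set ℕ) : Set ℕ :=
  {i ∈ E0 | (t : ℤ) ≤ (i : ℤ) + σ ∧ (i : ℤ) + σ ≤ (T : ℤ)}

end PalLen

open PalLen

/-- If `m ≥ 1`, `(D, ξ) ∈ NestPer(m)`, `D₀` is a bottom of `(D, ξ)` with
`ω(m−1, D₀) ≤ α`, and `D̄` is a ξ-cut of `D`, then `ω(m−1, D̄) ≤ 2α`. -/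
theorem statement13 {α : Type*} (z : List α) (hz : z ≠ []) (m : ℕ) (hm : 1 ≤ m)
    (D : Set ℕ) (ξ : ℕ) (hD : (D, ξ) ∈ PalLen.NestPer z m)
    (D₀ : Set ℕ) (hsub : D₀ ⊆ D)
    (hspread : D = PalLen.Spread D₀ ξ ∩ PalLen.Close D) (hdiam : PalLen.diam D₀ ≤ ξ)
    (a : ℕ) (ha : 1 ≤ a) (hω : PalLen.omegaMin z (m - 1) D₀ ≤ a)
    (D' : Set ℕ) (hcut : PalLen.IsCut D ξ D') :
    PalLen.omegaMin z (m - 1) D' ≤ 2 * a := by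
  obtain ⟨k, rfl⟩ : ∃ k, m = k + 1 := ⟨m - 1, by omega⟩
  simp only [Nat.add_sub_cancel] at hω ⊢
  obtain ⟨hW, hcuts'⟩ := hD
  obtain ⟨hDne', hDicc', hDeq', hperD'⟩ := hW
  have hDne : D.Nonempty := hDne'
  have hDicc : D ⊆ Set.Icc 1 z.length := hDicc'
  have hperD : IsPeriod (seg z (sInf D) (sSup D)) ξ := hperD'
  have hfinD : D.Finite := (Set.finite_Icc 1 z.length).subset hDicc
  have hLmem : sInf D ∈ D := Nat.sInf_mem hDne
  have hRmem : sSup D ∈ D := Nat.sSup_mem hDne hfinD.bddAbove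
  have hL : 1 ≤ sInf D := (hDicc hLmem).1
  have hR : sSup D ≤ z.length := (hDicc hRmem).2
  have hξ : 1 ≤ ξ := hperD.1
  rcases eq_or_ne D' ∅ with hDe | hDe
  · subst hDe
    refine le_trans (Nat.sInf_le ?_) (Nat.zero_le _)
    exact ⟨∅, Set.empty_subset _, Set.finite_empty, Set.ncard_empty _, by simp, by simp⟩
  · have hD'ne : D'.Nonempty := Set.nonempty_iff_ne_empty.mpr hDe
    have hD'sub : D' ⊆ D := hcut.1
    have hfinD' : D'.Finite := hfinD.subset hD'sub
    have hdiam' : diam D' ≤ ξ := by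
      rcases hcut.2 with h | h
      · exact absurd h hDe
      · exact h
    have htmem : sInf D' ∈ D' := Nat.sInf_mem hD'ne
    have hTmem : sSup D' ∈ D' := Nat.sSup_mem hD'ne hfinD'.bddAbove
    set t := sInf D' with htdef
    set T := sSup D' with hTdef
    have hD₀ne : D₀.Nonempty := by
      obtain ⟨d, hd⟩ := hDne
      rw [hspread] at hd
      obtain ⟨⟨i, hi, -⟩, -⟩ := hd
      exact ⟨i, hi⟩
    have hfinD₀ : D₀.Finite := hfinD.subset hsub
    have humem : sInf D₀ ∈ D₀ := Nat.sInf_mem hD₀ne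
    set u := sInf D₀ with hudef
    obtain ⟨M₀, hM₀sub, hM₀fin, hM₀card, hM₀cov, hM₀close⟩ :=
      exists_min_cover z hz k D₀ (hsub.trans hDicc)
    have hM₀a : M₀.ncard ≤ a := le_trans (le_of_eq hM₀card) hω
    have h0ξ : (0 : ℤ) < (ξ : ℤ) := by exact_mod_cast hξ
    obtain ⟨β, hβ1, hβ2⟩ : ∃ β : ℤ, β * (ξ : ℤ) ≤ (t : ℤ) - (u : ℤ) ∧
        (t : ℤ) - (u : ℤ) < (β + 1) * (ξ : ℤ) := by
      refine ⟨((t : ℤ) - (u : ℤ)) / (ξ : ℤ), ?_, ?_⟩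
      · have hdm := Int.mul_ediv_add_emod ((t : ℤ) - (u : ℤ)) (ξ : ℤ)
        have hnn := Int.emod_nonneg ((t : ℤ) - (u : ℤ)) (ne_of_gt h0ξ)
        nlinarith [hdm, hnn]
      · have hdm := Int.mul_ediv_add_emod ((t : ℤ) - (u : ℤ)) (ξ : ℤ)
        have hlt := Int.emod_lt_of_pos ((t : ℤ) - (u : ℤ)) h0ξ
        nlinarith [hdm, hlt]
    have hkey : ∀ n ∈ D', ∃ i ∈ D₀,
        ((n : ℤ) = (i : ℤ) + β * ξ ∨ (n : ℤ) = (i : ℤ) + (β + 1) * ξ) := by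
      intro n hn
      have hnD : n ∈ D := hD'sub hn
      rw [hspread] at hnD
      obtain ⟨⟨i, hi, c, hc⟩, -⟩ := hnD
      refine ⟨i, hi, ?_⟩
      have h1' : (t : ℤ) ≤ (n : ℤ) := by exact_mod_cast Nat.sInf_le hn
      have h2' : (n : ℤ) + 1 ≤ (t : ℤ) + (ξ : ℤ) := by
        exact_mod_cast (diam_le_iff hfinD' hD'ne).mp hdiam' _ htmem n hn
      have h3' : (u : ℤ) ≤ (i : ℤ) := by exact_mod_cast Nat.sInf_le hi
      have h4' : (i : ℤ) + 1 ≤ (u : ℤ) + (ξ : ℤ) := by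
        exact_mod_cast (diam_le_iff hfinD₀ hD₀ne).mp hdiam _ humem i hi
      have hcl : β ≤ c := by
        by_contra hcon
        push_neg at hcon
        have hle : c ≤ β - 1 := by omega
        have hmul : c * (ξ : ℤ) ≤ (β - 1) * (ξ : ℤ) :=
          mul_le_mul_of_nonneg_right hle h0ξ.le
        linarith [hβ1, hc, hmul]
      have hcu : c ≤ β + 1 := by
        by_contra hcon
        push_neg at hcon
        have hle : β + 2 ≤ c := by omega
        have hmul : (β + 2) * (ξ : ℤ) ≤ c * (ξ : ℤ) :=
          mul_le_mul_of_nonneg_right hle h0ξ.le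
        linarith [hβ2, hc, hmul]
      have hc2 : c = β ∨ c = β + 1 := by omega
      rcases hc2 with rfl | rfl
      · exact Or.inl hc
      · exact Or.inr hc
    have hCloseIcc : Close D₀ ⊆ Set.Icc (sInf D) (sSup D) := by
      intro x hx
      obtain ⟨⟨lo, hlo, h1⟩, ⟨hi2, hhi2, h2⟩⟩ := (close_mem_iff hfinD₀).mp hx
      have e1 : sInf D ≤ lo := Nat.sInf_le (hsub hlo)
      have e2 : hi2 ≤ sSup D := le_csSup hfinD.bddAbove (hsub hhi2)
      exact ⟨by omega, by omega⟩
    have htL : sInf D ≤ t := Nat.sInf_le (hD'sub htmem)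
    have hTR : T ≤ sSup D := le_csSup hfinD.bddAbove (hD'sub hTmem)
    have hF : ∀ σ : ℤ, (ξ : ℤ) ∣ σ →
        ∃ Mσ : Set (Set ℕ × ℕ), Mσ ⊆ NestPer z k ∧ Mσ.Finite ∧ Mσ.ncard ≤ a ∧
          (∀ n ∈ D', (∃ i ∈ D₀, (n : ℤ) = (i : ℤ) + σ) → n ∈ ⋃ C ∈ Mσ, C.1) ∧
          (⋃ C ∈ Mσ, C.1) ⊆ Close D' := by
      intro σ hσ
      refine ⟨(fun E => (zsh σ (truncSh (t) (T) σ E.1), E.2)) ''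
        {E ∈ M₀ | (truncSh (t) (T) σ E.1).Nonempty}, ?_, ?_, ?_, ?_, ?_⟩
      · rintro _ ⟨E, ⟨hEM, hEne⟩, rfl⟩
        have hE : (E.1, E.2) ∈ NestPer z k := hM₀sub hEM
        have hPsub : truncSh (t) (T) σ E.1 ⊆ E.1 := fun i hi => hi.1
        have htr : (truncSh (t) (T) σ E.1, E.2) ∈ NestPer z k := by
          refine nestPer_trunc z k E.1 E.2 hE _ hPsub hEne ?_
          rintro lo hi n ⟨-, hlo1, hlo2⟩ ⟨-, hhi1, hhi2⟩ hn h1 h2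
          exact ⟨hn, by omega, by omega⟩
        have hsubLR : truncSh (t) (T) σ E.1 ⊆ Set.Icc (sInf D) (sSup D) :=
          fun i hi => hCloseIcc (hM₀close (Set.mem_biUnion hEM (hPsub hi)))
        have hbnd : ∀ i ∈ truncSh (t) (T) σ E.1,
            ((sInf D : ℕ) : ℤ) ≤ (i : ℤ) + σ ∧ (i : ℤ) + σ ≤ ((sSup D : ℕ) : ℤ) := by
          rintro i ⟨-, h1, h2⟩
          constructor <;> omega
        exact nestPer_shift z (sInf D) (sSup D) ξ hperD hL hR σ hσ k _ E.2 htr hsubLR hbnd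
      · exact (hM₀fin.subset (Set.sep_subset _ _)).image _
      · exact le_trans (Set.ncard_image_le (hM₀fin.subset (Set.sep_subset _ _)))
          (le_trans (Set.ncard_le_ncard (Set.sep_subset _ _) hM₀fin) hM₀a)
      · rintro n hn ⟨i, hi, hni⟩
        obtain ⟨E, hEM, hiE⟩ := Set.mem_iUnion₂.mp (hM₀cov hi)
        have h1 : t ≤ n := Nat.sInf_le hn
        have h2 : n ≤ T := le_csSup hfinD'.bddAbove hn
        have hiP : i ∈ truncSh (t) (T) σ E.1 := ⟨hiE, by omega, by omega⟩
        exact Set.mem_biUnion (⟨E, ⟨hEM, ⟨i, hiP⟩⟩, rfl⟩ :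
          _ ∈ (fun E => (zsh σ (truncSh (t) (T) σ E.1), E.2)) ''
            {E ∈ M₀ | (truncSh (t) (T) σ E.1).Nonempty}) ⟨i, hiP, hni⟩
      · intro x hx
        obtain ⟨C1, hC1M, hxC⟩ := Set.mem_iUnion₂.mp hx
        obtain ⟨E, -, rfl⟩ := hC1M
        obtain ⟨i, ⟨-, h1, h2⟩, hxi⟩ := hxC
        exact ⟨hD'ne, by omega, by omega⟩
    obtain ⟨M₁, hM₁sub, hM₁fin, hM₁card, hM₁cov, hM₁close⟩ :=
      hF (β * ξ) (dvd_mul_left _ _)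
    obtain ⟨M₂, hM₂sub, hM₂fin, hM₂card, hM₂cov, hM₂close⟩ :=
      hF ((β + 1) * ξ) (dvd_mul_left _ _)
    refine le_trans (omegaMin_le_ncard z k D' (M₁ ∪ M₂) (Set.union_subset hM₁sub hM₂sub)
      (hM₁fin.union hM₂fin) ?_ ?_) (le_trans (Set.ncard_union_le _ _) (by omega))
    · intro n hn
      obtain ⟨i, hi, hcase⟩ := hkey n hn
      rcases hcase with h | h
      · have := hM₁cov n hn ⟨i, hi, h⟩
        rw [Set.biUnion_union]
        exact Set.mem_union_left _ this
      · have := hM₂cov n hn ⟨i, hi, h⟩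
        rw [Set.biUnion_union]
        exact Set.mem_union_right _ this
    · rw [Set.biUnion_union]
      exact Set.union_subset hM₁close hM₂close
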